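/- arXiv:2407.00103 — 2 statements merged into one kernel-verified Lean document; each statement's English description precedes it below -/
import Mathlib

section
/- For every integer n ≥ 2, the number of domatic partitions of the path P_n with exactly 2 parts equals the (n−1)-st Fibonacci number: dp(P_n,2) = F_{n-1}, where F_1 = F_2 = 1 and F_{k} = F_{k-1} + F_{k-2} for k ≥ 3. -/
/-- `S` is a dominating set of `G`: every vertex outside `S` has a neighbor in `S`. -/
def IsDominating {V : Type*} (G : SimpleGraph V) (S : Set V) : Prop :=
  ∀ v, v ∉ S → ∃ u ∈ S, G.Adj v u

/-- A domatic partition of `G`: a partition of the vertex set into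
(pairwise disjoint, nonempty) dominating sets. -/
def IsDomaticPartition {V : Type*} (G : SimpleGraph V) (P : Set (Set V)) : Prop :=
  Setoid.IsPartition P ∧ ∀ S ∈ P, IsDominating G S

/-- `dp G i` is the number of domatic partitions of `G` with exactly `i` parts. -/
noncomputable def dp {V : Type*} (G : SimpleGraph V) (i : ℕ) : ℕ :=
  {P : Set (Set V) | IsDomaticPartition G P ∧ P.ncard = i}.ncard

/-! A 2-part domatic partition `{S, T}` is the same thing as a colouring `f : V → Bool` in which
every vertex has a neighbour of the other colour (the classes are `S` and `T = Sᶜ`); fixing the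
colour of one vertex removes the freedom of swapping the two colours.

On the path `0 - 1 - ⋯ - (n+1)` this condition says `f 0 ≠ f 1` and that every later vertex
differs from one of its two neighbours. Let `N(n, a, b)` (`pathDomaticExceptZeroCount`) count the
colourings of `P_{n+2}` with `f 0 = a`, `f 1 = b` in which every vertex but `0` has a neighbour of
the other colour. Deleting vertex `0` gives `N(n+1, a, b) = N(n, b, b) + N(n, b, !b)` if `a ≠ b`
and `N(n+1, b, b) = N(n, b, !b)`, so `N(n, a, !a) = F (n+1)` and `N(n, a, a) = F n`. -/

open Finset SimpleGraph

theorem Setoid.isPartition_pair_compl {α : Type*} {S : Set α} (hS : S.Nonempty)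
    (hSc : Sᶜ.Nonempty) : Setoid.IsPartition {S, Sᶜ} := by
  refine Set.PairwiseDisjoint.isPartition_of_exists_of_ne_empty ?_ (fun a => ?_) ?_
  · simp [Set.PairwiseDisjoint, Set.pairwise_pair, Function.onFun, disjoint_compl_right,
      disjoint_compl_left]
  · by_cases ha : a ∈ S
    · exact ⟨S, Or.inl rfl, ha⟩
    · exact ⟨Sᶜ, Or.inr rfl, ha⟩
  · rintro (h | h)
    exacts [hS.ne_empty h.symm, hSc.ne_empty h.symm]

theorem Setoid.IsPartition.isCompl_of_pair {α : Type*} {S T : Set α}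
    (hP : Setoid.IsPartition {S, T}) (hST : S ≠ T) : IsCompl S T := by
  have hcover := hP.sUnion_eq_univ
  rw [Set.sUnion_pair] at hcover
  exact ⟨hP.pairwiseDisjoint (by simp) (by simp) hST, codisjoint_iff.mpr hcover⟩

theorem Fin.card_filter_zero_eq_and_tail {α : Type*} [Fintype α] [DecidableEq α] {n : ℕ}
    (a : α) (p : (Fin n → α) → Prop) [DecidablePred p] :
    #{f : Fin (n + 1) → α | f 0 = a ∧ p (Fin.tail f)} = #{g : Fin n → α | p g} := by
  let consA : (Fin n → α) ↪ (Fin (n + 1) → α) :=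
    ⟨fun g => Fin.cons a g, Fin.cons_right_injective (α := fun _ => α) a⟩
  rw [← card_map consA]
  congr 1
  ext f
  simp only [mem_filter, mem_univ, true_and, mem_map]
  constructor
  · rintro ⟨rfl, hf⟩
    exact ⟨Fin.tail f, hf, Fin.cons_self_tail f⟩
  · rintro ⟨g, hg, rfl⟩
    simpa [consA] using hg

section DomaticColoring

variable {V : Type*} {G : SimpleGraph V}

def colorClasses (f : V → Bool) : Set (Set V) :=
  {{v | f v = true}, {v | f v = false}}

theorem setOf_eq_mem_colorClasses (f : V → Bool) (b : Bool) :
    {v | f v = b} ∈ colorClasses f := by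
  cases b
  exacts [Or.inr rfl, Or.inl rfl]

theorem colorClasses_eq_pair_compl (f : V → Bool) :
    colorClasses f = {{v | f v = true}, {v | f v = true}ᶜ} := by
  simp [colorClasses, Set.compl_ofPred]

namespace SimpleGraph

def HasOtherColorNeighbor (G : SimpleGraph V) (f : V → Bool) (v : V) : Prop :=
  ∃ u, G.Adj v u ∧ f u ≠ f v

def IsDomaticColoring (G : SimpleGraph V) (f : V → Bool) : Prop :=
  ∀ v, G.HasOtherColorNeighbor f v

theorem isDomaticColoring_iff_forall_isDominating {f : V → Bool} :
    G.IsDomaticColoring f ↔ ∀ b, IsDominating G {v | f v = b} := by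
  refine ⟨fun hf b v hv => ?_, fun hf v => ?_⟩
  · obtain ⟨u, hadj, hne⟩ := hf v
    exact ⟨u, (Bool.eq_not.mpr hne).trans (Bool.eq_not.mpr (Ne.symm hv)).symm, hadj⟩
  · obtain ⟨u, hu, hadj⟩ := hf (!f v) v (by simp)
    exact ⟨u, hadj, Bool.eq_not.mp hu⟩

theorem IsDomaticColoring.exists_eq [Nonempty V] {f : V → Bool} (hf : G.IsDomaticColoring f)
    (b : Bool) : ∃ v, f v = b := by
  obtain ⟨v⟩ := ‹Nonempty V›
  by_cases hv : f v = b
  · exact ⟨v, hv⟩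
  · obtain ⟨u, hu, -⟩ := isDomaticColoring_iff_forall_isDominating.mp hf b v hv
    exact ⟨u, hu⟩

theorem IsDomaticColoring.isDomaticPartition_colorClasses [Nonempty V] {f : V → Bool}
    (hf : G.IsDomaticColoring f) : IsDomaticPartition G (colorClasses f) := by
  refine ⟨?_, ?_⟩
  · rw [colorClasses_eq_pair_compl]
    obtain ⟨u, hu⟩ := hf.exists_eq false
    exact Setoid.isPartition_pair_compl (hf.exists_eq true) ⟨u, by simp [hu]⟩
  · rintro S (rfl | rfl) <;> exact isDomaticColoring_iff_forall_isDominating.mp hf _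

theorem IsDomaticColoring.ncard_colorClasses [Nonempty V] {f : V → Bool}
    (hf : G.IsDomaticColoring f) : (colorClasses f).ncard = 2 := by
  obtain ⟨v, hv⟩ := hf.exists_eq true
  refine Set.ncard_pair fun h => ?_
  have : v ∈ {v | f v = false} := h ▸ hv
  simp_all

end SimpleGraph

theorem IsDomaticPartition.exists_colorClasses_eq {P : Set (Set V)} (hP : IsDomaticPartition G P)
    (hP2 : P.ncard = 2) (v₀ : V) :
    ∃ f, G.IsDomaticColoring f ∧ f v₀ = true ∧ colorClasses f = P := by
  classical
  obtain ⟨S, T, hST, rfl⟩ := Set.ncard_eq_two.mp hP2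
  wlog hv₀ : v₀ ∈ S generalizing S T
  · rw [Set.pair_comm] at hP ⊢
    refine this T S hST.symm hP (by rwa [Set.pair_comm]) ?_
    rw [← (hP.1.isCompl_of_pair hST.symm).symm.compl_eq]
    exact hv₀
  have hclasses : colorClasses (fun v => decide (v ∈ S)) = {S, T} := by
    have hS : {v | decide (v ∈ S) = true} = S := by simp
    rw [colorClasses_eq_pair_compl, hS, (hP.1.isCompl_of_pair hST).compl_eq]
  refine ⟨fun v => decide (v ∈ S), ?_, by simpa using hv₀, hclasses⟩
  rw [isDomaticColoring_iff_forall_isDominating]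
  exact fun b => hP.2 _ (hclasses ▸ setOf_eq_mem_colorClasses _ b)

theorem colorClasses_injOn (v₀ : V) :
    Set.InjOn colorClasses {f : V → Bool | f v₀ = true} := by
  intro f hf g hg hfg
  have htrue : {v | f v = true} = {v | g v = true} := by
    rcases hfg ▸ setOf_eq_mem_colorClasses f true with h | h
    · exact h
    · have : v₀ ∈ {v | g v = false} := Set.mem_singleton_iff.mp h ▸ hf
      simp_all
  funext v
  simpa using Set.ext_iff.mp htrue v

theorem dp_two_eq_ncard (v₀ : V) :
    dp G 2 = {f : V → Bool | G.IsDomaticColoring f ∧ f v₀ = true}.ncard := by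
  have : Nonempty V := ⟨v₀⟩
  have himage : {P : Set (Set V) | IsDomaticPartition G P ∧ P.ncard = 2} =
      colorClasses '' {f | G.IsDomaticColoring f ∧ f v₀ = true} := by
    ext P
    constructor
    · rintro ⟨hP, hP2⟩
      obtain ⟨f, hf, hf₀, rfl⟩ := hP.exists_colorClasses_eq hP2 v₀
      exact ⟨f, ⟨hf, hf₀⟩, rfl⟩
    · rintro ⟨f, ⟨hf, -⟩, rfl⟩
      exact ⟨hf.isDomaticPartition_colorClasses, hf.ncard_colorClasses⟩
  rw [dp, himage, ((colorClasses_injOn v₀).mono fun f hf => hf.2).ncard_image]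

end DomaticColoring

namespace SimpleGraph

theorem pathGraph_adj_succ_succ {n : ℕ} {i j : Fin n} :
    (pathGraph (n + 1)).Adj i.succ j.succ ↔ (pathGraph n).Adj i j := by
  simp [pathGraph_adj]

theorem pathGraph_adj_zero_iff {n : ℕ} {u : Fin (n + 2)} :
    (pathGraph (n + 2)).Adj 0 u ↔ u = 1 := by
  rw [pathGraph_adj, Fin.ext_iff, Fin.val_zero, Fin.val_one]
  omega

theorem pathGraph_adj_one_iff {n : ℕ} {u : Fin (n + 3)} :
    (pathGraph (n + 3)).Adj 1 u ↔ u = 0 ∨ u = 2 := by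
  rw [pathGraph_adj, Fin.ext_iff, Fin.ext_iff, Fin.val_zero, Fin.val_one, Fin.val_two]
  omega

theorem hasOtherColorNeighbor_pathGraph_zero_iff {n : ℕ} (f : Fin (n + 2) → Bool) :
    (pathGraph (n + 2)).HasOtherColorNeighbor f 0 ↔ f 1 ≠ f 0 :=
  ⟨fun ⟨_, hadj, hne⟩ => pathGraph_adj_zero_iff.mp hadj ▸ hne,
    fun hne => ⟨1, pathGraph_adj_zero_iff.mpr rfl, hne⟩⟩

theorem hasOtherColorNeighbor_pathGraph_one_iff {n : ℕ} (f : Fin (n + 3) → Bool) :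
    (pathGraph (n + 3)).HasOtherColorNeighbor f 1 ↔ f 0 ≠ f 1 ∨ f 2 ≠ f 1 := by
  constructor
  · rintro ⟨u, hadj, hne⟩
    rcases pathGraph_adj_one_iff.mp hadj with rfl | rfl
    exacts [Or.inl hne, Or.inr hne]
  · rintro (hne | hne)
    exacts [⟨0, pathGraph_adj_one_iff.mpr (Or.inl rfl), hne⟩,
      ⟨2, pathGraph_adj_one_iff.mpr (Or.inr rfl), hne⟩]

theorem hasOtherColorNeighbor_pathGraph_cons_succ_succ_iff {n : ℕ} (a : Bool)
    (g : Fin (n + 1) → Bool) (j : Fin n) :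
    (pathGraph (n + 2)).HasOtherColorNeighbor (Fin.cons a g) j.succ.succ ↔
      (pathGraph (n + 1)).HasOtherColorNeighbor g j.succ := by
  constructor
  · rintro ⟨u, hadj, hne⟩
    cases u using Fin.cases with
    | zero => simp [pathGraph_adj] at hadj
    | succ u => exact ⟨u, pathGraph_adj_succ_succ.mp hadj, by simpa using hne⟩
  · rintro ⟨u, hadj, hne⟩
    exact ⟨u.succ, pathGraph_adj_succ_succ.mpr hadj, by simpa using hne⟩

def IsPathDomaticExceptZero {n : ℕ} (f : Fin (n + 1) → Bool) : Prop :=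
  ∀ i : Fin n, (pathGraph (n + 1)).HasOtherColorNeighbor f i.succ

theorem isDomaticColoring_pathGraph_iff {n : ℕ} (f : Fin (n + 2) → Bool) :
    (pathGraph (n + 2)).IsDomaticColoring f ↔ f 1 ≠ f 0 ∧ IsPathDomaticExceptZero f := by
  rw [IsDomaticColoring, Fin.forall_fin_succ, hasOtherColorNeighbor_pathGraph_zero_iff]
  rfl

theorem isPathDomaticExceptZero_cons_iff {n : ℕ} (a : Bool) (g : Fin (n + 2) → Bool) :
    IsPathDomaticExceptZero (Fin.cons a g : Fin (n + 3) → Bool) ↔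
      (g 0 ≠ a ∨ g 1 ≠ g 0) ∧ IsPathDomaticExceptZero g := by
  rw [IsPathDomaticExceptZero, Fin.forall_fin_succ]
  refine and_congr ?_ (forall_congr' fun j => ?_)
  · have h2 : (Fin.cons a g : Fin (n + 3) → Bool) 2 = g 1 := rfl
    rw [Fin.succ_zero_eq_one, hasOtherColorNeighbor_pathGraph_one_iff, h2]
    simp [ne_comm]
  · exact hasOtherColorNeighbor_pathGraph_cons_succ_succ_iff a g j

theorem isPathDomaticExceptZero_two_iff (f : Fin 2 → Bool) :
    IsPathDomaticExceptZero f ↔ f 0 ≠ f 1 := by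
  simp [IsPathDomaticExceptZero, HasOtherColorNeighbor, pathGraph_two_eq_top]

end SimpleGraph

section Counting

open Classical

noncomputable def pathDomaticExceptZeroCount (n : ℕ) (a b : Bool) : ℕ :=
  #{f : Fin (n + 2) → Bool | f 0 = a ∧ f 1 = b ∧ IsPathDomaticExceptZero f}

theorem pathDomaticExceptZeroCount_zero (a b : Bool) :
    pathDomaticExceptZeroCount 0 a b = if a = b then 0 else 1 := by
  simp only [pathDomaticExceptZeroCount, isPathDomaticExceptZero_two_iff]
  cases a <;> cases b <;> decide

theorem pathDomaticExceptZeroCount_succ (n : ℕ) (a b : Bool) :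
    pathDomaticExceptZeroCount (n + 1) a b =
      #{g : Fin (n + 2) → Bool |
        g 0 = b ∧ (b ≠ a ∨ g 1 ≠ b) ∧ IsPathDomaticExceptZero g} := by
  rw [pathDomaticExceptZeroCount, ← Fin.card_filter_zero_eq_and_tail a
    (fun g => g 0 = b ∧ (b ≠ a ∨ g 1 ≠ b) ∧ IsPathDomaticExceptZero g)]
  congr 1
  refine filter_congr fun f _ => ?_
  obtain ⟨c, g, rfl⟩ : ∃ c g, f = Fin.cons c g :=
    ⟨f 0, Fin.tail f, (Fin.cons_self_tail f).symm⟩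
  simp only [Fin.cons_zero, Fin.cons_one, Fin.tail_cons, isPathDomaticExceptZero_cons_iff]
  constructor <;> rintro ⟨rfl, rfl, h⟩ <;> exact ⟨rfl, rfl, h⟩

theorem pathDomaticExceptZeroCount_succ_self (n : ℕ) (b : Bool) :
    pathDomaticExceptZeroCount (n + 1) b b = pathDomaticExceptZeroCount n b (!b) := by
  rw [pathDomaticExceptZeroCount_succ, pathDomaticExceptZeroCount]
  simp [Bool.eq_not]

theorem pathDomaticExceptZeroCount_succ_of_ne {n : ℕ} {a b : Bool} (hab : b ≠ a) :
    pathDomaticExceptZeroCount (n + 1) a b =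
      pathDomaticExceptZeroCount n b b + pathDomaticExceptZeroCount n b (!b) := by
  rw [pathDomaticExceptZeroCount_succ, ← card_filter_add_card_filter_not (p := fun g => g 1 = b)]
  simp only [pathDomaticExceptZeroCount, filter_filter, hab, ne_eq, not_false_eq_true, true_or,
    true_and, ← Bool.eq_not]
  congr 2 <;> exact filter_congr fun g _ => by tauto

theorem pathDomaticExceptZeroCount_eq_fib (n : ℕ) (a : Bool) :
    pathDomaticExceptZeroCount n a (!a) = Nat.fib (n + 1) ∧
      pathDomaticExceptZeroCount n a a = Nat.fib n := by
  induction n generalizing a with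
  | zero => simp [pathDomaticExceptZeroCount_zero]
  | succ n ih =>
    rw [pathDomaticExceptZeroCount_succ_of_ne (Bool.not_ne_self a),
      pathDomaticExceptZeroCount_succ_self, (ih (!a)).1, (ih (!a)).2, (ih a).1, Nat.fib_add_two]
    exact ⟨rfl, rfl⟩

end Counting

theorem ncard_isDomaticColoring_pathGraph (n : ℕ) :
    {f : Fin (n + 2) → Bool | (pathGraph (n + 2)).IsDomaticColoring f ∧ f 0 = true}.ncard =
      Nat.fib (n + 1) := by
  classical
  rw [← (pathDomaticExceptZeroCount_eq_fib n true).1, pathDomaticExceptZeroCount,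
    ← Set.ncard_coe_finset]
  congr 1
  ext f
  simp only [isDomaticColoring_pathGraph_iff, Set.mem_ofPred_eq, coe_filter, mem_univ, true_and,
    Bool.not_true]
  constructor
  · rintro ⟨⟨h1, h⟩, h0⟩
    exact ⟨h0, by simpa [h0] using h1, h⟩
  · rintro ⟨h0, h1, h⟩
    exact ⟨⟨by simp [h0, h1], h⟩, h0⟩

/-- For every `n ≥ 2`, the number of 2-part domatic partitions of the path `P_n`
is the `(n-1)`-st Fibonacci number (with `F_1 = F_2 = 1`). -/
theorem dp_path_eq_fib (n : ℕ) (hn : 2 ≤ n) :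
    dp (SimpleGraph.pathGraph n) 2 = Nat.fib (n - 1) := by
  obtain ⟨n, rfl⟩ := Nat.exists_eq_add_of_le' hn
  rw [dp_two_eq_ncard 0, ncard_isDomaticColoring_pathGraph]
  rfl
end

section
/- For every integer n ≥ 2, the number of domatic partitions with 2 parts of the corona of the path with a single pendant vertex satisfies dp(P_n ∘ K_1, 2) = 2·dp(P_{n-1} ∘ K_1, 2), with dp(P_2 ∘ K_1, 2) = 2. -/
/-- The corona `G ∘ K₁`: attach one new pendant leaf `Sum.inr v` to each
vertex `Sum.inl v` of `G`. -/
def coronaK1 {V : Type*} (G : SimpleGraph V) : SimpleGraph (V ⊕ V) where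
  Adj a b :=
    match a, b with
    | Sum.inl u, Sum.inl v => G.Adj u v
    | Sum.inl u, Sum.inr v => u = v
    | Sum.inr u, Sum.inl v => u = v
    | Sum.inr _, Sum.inr _ => False
  symm := by
    constructor
    rintro (u | u) (v | v) h <;> simp_all [SimpleGraph.adj_comm]
  loopless := by
    constructor
    rintro (u | u) h <;> simp_all

/-!
A leaf `v'` of `G ∘ K₁` has `v` as its only neighbour, so a part `S` and its complement both
dominate iff `S` contains exactly one of `v, v'` for every `v`. Hence the 2-part domatic
partitions are the pairs `{S_A, S_Aᶜ}` with `S_A = A ∪ {v' | v ∉ A}` (`pendantSplit A`), one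
for each unordered pair `{A, Aᶜ}` of subsets of `V`: there are `2 ^ (|V| - 1)` of them,
whatever the edges of `G`.
-/

open Set

theorem Setoid.isPartition_and_ncard_eq_two_iff {α : Type*} {P : Set (Set α)} :
    IsPartition P ∧ P.ncard = 2 ↔ ∃ S : Set α, S.Nonempty ∧ Sᶜ.Nonempty ∧ P = {S, Sᶜ} := by
  constructor
  · rintro ⟨hP, hcard⟩
    obtain ⟨S, T, hne, rfl⟩ := ncard_eq_two.mp hcard
    have hST : IsCompl S T :=
      ⟨hP.pairwiseDisjoint (.inl rfl) (.inr rfl) hne,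
        codisjoint_iff.2 (by simpa using hP.sUnion_eq_univ)⟩
    rw [← hST.compl_eq] at hP ⊢
    exact ⟨S, nonempty_of_mem_partition hP (.inl rfl),
      nonempty_of_mem_partition hP (.inr rfl), rfl⟩
  · rintro ⟨S, hS, hSc, rfl⟩
    have : Nonempty α := hS.to_type
    refine ⟨PairwiseDisjoint.isPartition_of_exists_of_ne_empty ?_ ?_ ?_, ncard_pair ne_compl_self⟩
    · exact pairwise_pair.2 fun _ => ⟨disjoint_compl_right, disjoint_compl_left⟩
    · intro a
      by_cases ha : a ∈ S
      exacts [⟨S, .inl rfl, ha⟩, ⟨Sᶜ, .inr rfl, ha⟩]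
    · rintro (h | h)
      exacts [hS.ne_empty h.symm, hSc.ne_empty h.symm]

theorem isDomaticPartition_and_ncard_eq_two_iff {V : Type*} {G : SimpleGraph V}
    {P : Set (Set V)} :
    IsDomaticPartition G P ∧ P.ncard = 2 ↔ ∃ S : Set V, S.Nonempty ∧ Sᶜ.Nonempty ∧
      IsDominating G S ∧ IsDominating G Sᶜ ∧ P = {S, Sᶜ} := by
  rw [IsDomaticPartition, and_right_comm, Setoid.isPartition_and_ncard_eq_two_iff]
  constructor
  · rintro ⟨⟨S, hS, hSc, rfl⟩, hdom⟩
    exact ⟨S, hS, hSc, hdom S (.inl rfl), hdom Sᶜ (.inr rfl), rfl⟩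
  · rintro ⟨S, hS, hSc, hdomS, hdomSc, rfl⟩
    exact ⟨⟨S, hS, hSc, rfl⟩, by rintro T (rfl | rfl) <;> assumption⟩

theorem Set.ncard_setOf_mem {α : Type*} [Finite α] (a : α) :
    {s : Set α | a ∈ s}.ncard = 2 ^ (Nat.card α - 1) := by
  have hcard : Nat.card (Set α) = 2 ^ Nat.card α := by
    have := Fintype.ofFinite α
    rw [Nat.card_eq_fintype_card, Fintype.card_set, Nat.card_eq_fintype_card]
  have hcompl : {s : Set α | a ∈ s}ᶜ = compl '' {s | a ∈ s} := by
    rw [compl_involutive.image_eq_preimage_symm]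
    rfl
  have htotal := ncard_add_ncard_compl {s : Set α | a ∈ s}
  rw [hcompl, ncard_image_of_injective _ compl_injective, hcard] at htotal
  have : Nonempty α := ⟨a⟩
  obtain ⟨n, hn⟩ := Nat.exists_eq_succ_of_ne_zero (Nat.card_pos (α := α)).ne'
  rw [hn, pow_succ] at htotal
  rw [hn, Nat.succ_sub_one]
  omega

namespace coronaK1

variable {V : Type*} {G : SimpleGraph V}

theorem adj_inr_iff {u : V} {x : V ⊕ V} : (coronaK1 G).Adj (Sum.inr u) x ↔ x = Sum.inl u := by
  cases x <;> simp [coronaK1, eq_comm]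

theorem inl_mem_of_isDominating {S : Set (V ⊕ V)} (hS : IsDominating (coronaK1 G) S) {v : V}
    (hv : Sum.inr v ∉ S) : Sum.inl v ∈ S := by
  obtain ⟨x, hx, hadj⟩ := hS _ hv
  rwa [adj_inr_iff.1 hadj] at hx

def pendantSplit (A : Set V) : Set (V ⊕ V) := {x | Sum.elim (· ∈ A) (· ∉ A) x}

@[simp] theorem mem_pendantSplit_inl {A : Set V} {v : V} :
    Sum.inl v ∈ pendantSplit A ↔ v ∈ A := Iff.rfl

@[simp] theorem mem_pendantSplit_inr {A : Set V} {v : V} :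
    Sum.inr v ∈ pendantSplit A ↔ v ∉ A := Iff.rfl

theorem compl_pendantSplit (A : Set V) : (pendantSplit A)ᶜ = pendantSplit Aᶜ := by
  ext (v | v) <;> simp

theorem pendantSplit_injective : Function.Injective (pendantSplit (V := V)) :=
  Function.LeftInverse.injective (g := (Sum.inl ⁻¹' ·)) fun _ => rfl

theorem pendantSplit_nonempty [Nonempty V] (A : Set V) : (pendantSplit A).Nonempty := by
  obtain ⟨v⟩ := ‹Nonempty V›
  by_cases hv : v ∈ A
  exacts [⟨Sum.inl v, hv⟩, ⟨Sum.inr v, hv⟩]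

theorem isDominating_pendantSplit (A : Set V) : IsDominating (coronaK1 G) (pendantSplit A) := by
  rintro (v | v) hv
  · exact ⟨Sum.inr v, hv, rfl⟩
  · exact ⟨Sum.inl v, not_not.1 hv, rfl⟩

theorem isDominating_and_compl_iff {S : Set (V ⊕ V)} :
    IsDominating (coronaK1 G) S ∧ IsDominating (coronaK1 G) Sᶜ ↔ ∃ A, S = pendantSplit A := by
  constructor
  · rintro ⟨hS, hSc⟩
    refine ⟨Sum.inl ⁻¹' S, ?_⟩
    ext (v | v)
    · rfl
    · exact ⟨fun hv => inl_mem_of_isDominating hSc (not_not.2 hv),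
      fun hv => not_not.1 (mt (inl_mem_of_isDominating hS) hv)⟩
  · rintro ⟨A, rfl⟩
    rw [compl_pendantSplit]
    exact ⟨isDominating_pendantSplit A, isDominating_pendantSplit Aᶜ⟩

theorem isDomaticPartition_and_ncard_eq_two_iff [Nonempty V] {P : Set (Set (V ⊕ V))} :
    IsDomaticPartition (coronaK1 G) P ∧ P.ncard = 2 ↔
      ∃ A, P = {pendantSplit A, pendantSplit Aᶜ} := by
  rw [_root_.isDomaticPartition_and_ncard_eq_two_iff]
  constructor
  · rintro ⟨S, -, -, hS, hSc, rfl⟩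
    obtain ⟨A, rfl⟩ := isDominating_and_compl_iff.1 ⟨hS, hSc⟩
    exact ⟨A, by rw [compl_pendantSplit]⟩
  · rintro ⟨A, rfl⟩
    refine ⟨pendantSplit A, pendantSplit_nonempty A, ?_, isDominating_pendantSplit A, ?_, ?_⟩ <;>
      rw [compl_pendantSplit]
    exacts [pendantSplit_nonempty Aᶜ, isDominating_pendantSplit Aᶜ]

theorem setOf_isDomaticPartition_two_eq_image (v : V) :
    {P | IsDomaticPartition (coronaK1 G) P ∧ P.ncard = 2} =
      (fun A => {pendantSplit A, pendantSplit Aᶜ}) '' {A | v ∈ A} := by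
  have : Nonempty V := ⟨v⟩
  ext P
  rw [mem_ofPred_eq, isDomaticPartition_and_ncard_eq_two_iff]
  constructor
  · rintro ⟨A, rfl⟩
    by_cases hv : v ∈ A
    · exact ⟨A, hv, rfl⟩
    · exact ⟨Aᶜ, hv, by simp only [compl_compl, pair_comm]⟩
  · rintro ⟨A, -, rfl⟩
    exact ⟨A, rfl⟩

theorem injOn_pendantSplit_pair (v : V) :
    InjOn (fun A => ({pendantSplit A, pendantSplit Aᶜ} : Set (Set (V ⊕ V)))) {A | v ∈ A} := by
  intro A hA B hB h
  rcases pair_eq_pair_iff.1 h with ⟨h, -⟩ | ⟨h, -⟩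
  · exact pendantSplit_injective h
  · have hAB : A = Bᶜ := pendantSplit_injective h
    subst hAB
    exact (hA hB).elim

end coronaK1

theorem dp_coronaK1_two {V : Type*} [Finite V] [Nonempty V] (G : SimpleGraph V) :
    dp (coronaK1 G) 2 = 2 ^ (Nat.card V - 1) := by
  obtain ⟨v⟩ := ‹Nonempty V›
  rw [dp, coronaK1.setOf_isDomaticPartition_two_eq_image v,
    (coronaK1.injOn_pendantSplit_pair v).ncard_image, ncard_setOf_mem]

/-- For every `n ≥ 2`, `dp(P_n ∘ K₁, 2) = 2 · dp(P_{n-1} ∘ K₁, 2)`, with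
`dp(P_2 ∘ K₁, 2) = 2`. -/
theorem dp_corona_path_recurrence :
    dp (coronaK1 (SimpleGraph.pathGraph 2)) 2 = 2 ∧
      ∀ n : ℕ, 2 ≤ n →
        dp (coronaK1 (SimpleGraph.pathGraph n)) 2 =
          2 * dp (coronaK1 (SimpleGraph.pathGraph (n - 1))) 2 := by
  have dp_path (n : ℕ) (hn : 1 ≤ n) :
      dp (coronaK1 (SimpleGraph.pathGraph n)) 2 = 2 ^ (n - 1) := by
    have : NeZero n := ⟨by omega⟩
    rw [dp_coronaK1_two, Nat.card_fin]
  refine ⟨dp_path 2 one_le_two, fun n hn => ?_⟩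
  rw [dp_path n (by omega), dp_path (n - 1) (by omega), ← pow_succ']
  congr 1
  omega
end
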